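/- Suppose the value function recursion V_k(ẽ) = min_{δ ∈ {0,1}} { θ δ + (1-δ) ẽᵀ M ẽ + c + E[V_{k+1}((1-δ) A ẽ + n)] } holds, where n is a mean-zero Gaussian (or any symmetric-law) random vector independent of ẽ, M ⪰ 0, and V_{N+1} ≡ 0. Then V_k is a symmetric function of ẽ for every k: V_k(ẽ) = V_k(−ẽ). -/
import Mathlib


open Matrix MeasureTheory

/-- Symmetry of the value function: under the dynamic-programming recursion with
symmetric-law noise, each value function is a symmetric function of the mismatch. -/
theorem stmt19 {n : ℕ} (N : ℕ) (A : Matrix (Fin n) (Fin n) ℝ)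
    (M : ℕ → Matrix (Fin n) (Fin n) ℝ) (hM : ∀ k, (M k).PosSemidef)
    (θ : ℝ) (hθ : 0 < θ) (c : ℕ → ℝ)
    (ν : Measure (Fin n → ℝ)) [IsProbabilityMeasure ν]
    (hνsym : ν.map (fun x => -x) = ν)
    (V : ℕ → (Fin n → ℝ) → ℝ) (hVmeas : ∀ k, Measurable (V k))
    (hterm : ∀ e : Fin n → ℝ, V (N + 1) e = 0)
    (hrec : ∀ k ≤ N, ∀ e : Fin n → ℝ,
      V k e = min (θ + c k + ∫ x, V (k + 1) x ∂ν)
        ((e ⬝ᵥ (M k).mulVec e) + c k + ∫ x, V (k + 1) (A.mulVec e + x) ∂ν)) :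
    ∀ k ≤ N + 1, ∀ e : Fin n → ℝ, V k e = V k (-e) := by
  have key : ∀ j, j ≤ N + 1 → ∀ e : Fin n → ℝ, V (N + 1 - j) e = V (N + 1 - j) (-e) := by
    intro j
    induction j with
    | zero => simp [hterm]
    | succ j ih =>
      intro hj e
      set k := N + 1 - (j + 1) with hkdef
      have hk : k ≤ N := by omega
      have hksucc : k + 1 = N + 1 - j := by omega
      have hVk1 : ∀ e : Fin n → ℝ, V (k + 1) e = V (k + 1) (-e) := by
        rw [hksucc]; exact ih (by omega)
      have hint : ∀ v : Fin n → ℝ,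
          (∫ x, V (k + 1) (v + x) ∂ν) = ∫ x, V (k + 1) (-v + x) ∂ν := by
        intro v
        have h1 : (∫ x, V (k + 1) (-v + x) ∂ν)
            = ∫ x, V (k + 1) (-v + -x) ∂ν := by
          conv_lhs => rw [← hνsym]
          rw [integral_map (f := fun x => V (k + 1) (-v + x))
            measurable_neg.aemeasurable
            (((hVmeas (k+1)).comp (measurable_const_add (-v))).aestronglyMeasurable)]
        rw [h1]
        congr 1
        ext x
        rw [hVk1 (v + x)]
        ring_nf
      rw [hrec k hk e, hrec k hk (-e)]
      congr 1
      have hq : (-e) ⬝ᵥ (M k).mulVec (-e) = e ⬝ᵥ (M k).mulVec e := by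
        simp [Matrix.mulVec_neg, dotProduct_neg, neg_dotProduct]
      rw [hq]
      congr 1
      rw [hint (A.mulVec e)]
      simp [Matrix.mulVec_neg]
  intro k hk e
  have : k = N + 1 - (N + 1 - k) := by omega
  rw [this]; exact key _ (by omega) e
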